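/- If the score of every Delaunay star in a saturated packing of unit balls is at most s, where s < 16π/3, then the density of the packing is at most 16π·δ_oct/(16π − 3s). In particular, if every Delaunay star scores at most 8 pt, the density is at most π/√18. -/

import Mathlib

noncomputable section
open MeasureTheory Real

local notation "E" => EuclideanSpace ℝ (Fin 3)

/-- δ_oct, the density of a regular octahedron with edge 2. -/
def deltaOct : ℝ := (-3*π + 12*Real.arccos (1/Real.sqrt 3)) / Real.sqrt 8

/-- One point: the compression of the regular simplex with edge 2. -/
def pt : ℝ := 11*π/3 - 12*Real.arccos (1/Real.sqrt 3)

/-- The (upper) density of a packing with centers Λ: the limsup as N → ∞ of the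
ratio of the volume of the unit balls centered in the ball of radius N to the
volume of that ball. -/
def packingDensity (Λ : Set E) : ℝ :=
  Filter.limsup (fun N : ℝ =>
    ((Nat.card ↥(Λ ∩ Metric.closedBall (0:E) N)) * (4*π/3)) /
      (volume (Metric.closedBall (0:E) N)).toReal) Filter.atTop

/-
Bounding every score by `s` turns the asymptotic identity into
`|Λ_N| (16π - 3s) ≤ 16π δ_oct N³ + O(N²)`; dividing by `vol B_N = 4πN³/3` and letting `N → ∞`
gives the density bound. For `s = 8 pt` one has `16π - 24 pt = 24 (12 arccos(1/√3) - 3π)`,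
and the bound collapses to `π/√18`.
-/

open Filter Topology Metric

lemma Set.finite_inter_of_le_dist {X : Type*} [MetricSpace X] {Λ K : Set X} {r : ℝ}
    (hr : 0 < r) (hΛ : ∀ x ∈ Λ, ∀ y ∈ Λ, x ≠ y → r ≤ dist x y) (hK : IsCompact K) :
    (Λ ∩ K).Finite := by
  obtain ⟨t, hKt⟩ := hK.elim_finite_subcover (fun x : X => ball x (r / 2))
    (fun _ => isOpen_ball) (fun x _ => mem_iUnion.2 ⟨x, mem_ball_self (half_pos hr)⟩)
  have hcover : Λ ∩ K ⊆ ⋃ x ∈ t, Λ ∩ ball x (r / 2) := fun v hv => by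
    obtain ⟨x, hx, hvx⟩ := mem_iUnion₂.1 (hKt hv.2)
    exact mem_iUnion₂.2 ⟨x, hx, hv.1, hvx⟩
  refine (t.finite_toSet.biUnion fun x _ => ?_).subset hcover
  refine Set.Subsingleton.finite fun v hv w hw => by_contra fun hvw => ?_
  have := dist_triangle_right v w x
  linarith [hΛ v hv.1 w hw.1 hvw, mem_ball.1 hv.2, mem_ball.1 hw.2]

lemma finsum_mem_le_natCard_nsmul {α M : Type*} [AddCommMonoid M] [PartialOrder M]
    [IsOrderedAddMonoid M] {S : Set α} (hS : S.Finite) {f : α → M} {b : M}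
    (hf : ∀ v ∈ S, f v ≤ b) : ∑ᶠ v ∈ S, f v ≤ Nat.card S • b := by
  rw [finsum_mem_eq_finite_toFinset_sum f hS, Nat.card_eq_card_finite_toFinset hS]
  exact Finset.sum_le_card_nsmul _ _ _ fun v hv => hf v (hS.mem_toFinset.1 hv)

lemma limsup_le_of_le_add_div {f : ℝ → ℝ} {L K : ℝ} (hf : ∀ N, 0 ≤ f N)
    (hle : ∀ N ≥ 1, f N ≤ L + K / N) : limsup f atTop ≤ L := by
  have hlim : Tendsto (fun N : ℝ => L + K / N) atTop (𝓝 L) := by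
    simpa using tendsto_const_nhds.add ((tendsto_const_nhds (x := K)).div_atTop tendsto_id)
  calc limsup f atTop ≤ limsup (fun N : ℝ => L + K / N) atTop :=
        limsup_le_limsup (eventually_atTop.2 ⟨1, hle⟩)
          (isCoboundedUnder_le_of_le atTop hf) hlim.isBoundedUnder_le
    _ = L := hlim.limsup_eq

lemma EuclideanSpace.volume_closedBall_fin_three_toReal (x : E) {r : ℝ} (hr : 0 ≤ r) :
    (volume (closedBall x r)).toReal = 4 * π / 3 * r ^ 3 := by
  rw [EuclideanSpace.volume_closedBall_fin_three, ENNReal.toReal_mul, ENNReal.toReal_pow,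
    ENNReal.toReal_ofReal hr, ENNReal.toReal_ofReal (by positivity)]
  ring

lemma packingDensity_le_of_natCard_le {Λ : Set E} {L K : ℝ}
    (hcard : ∀ N ≥ 1, (Nat.card ↥(Λ ∩ closedBall (0 : E) N) : ℝ) ≤ L * N ^ 3 + K * N ^ 2) :
    packingDensity Λ ≤ L := by
  refine limsup_le_of_le_add_div (K := K) (fun N => by positivity) fun N hN => ?_
  have hN0 : 0 < N := zero_lt_one.trans_le hN
  rw [EuclideanSpace.volume_closedBall_fin_three_toReal 0 hN0.le,
    div_le_iff₀ (by positivity)]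
  calc _ ≤ (L * N ^ 3 + K * N ^ 2) * (4 * π / 3) := by gcongr; exact hcard N hN
    _ = (L + K / N) * (4 * π / 3 * N ^ 3) := by field_simp

lemma pi_div_four_lt_arccos_inv_sqrt_three : π / 4 < arccos (1 / √3) := by
  have hlt : 1 / √3 < √2 / 2 := by
    rw [div_lt_div_iff₀ (by positivity) two_pos, ← Real.sqrt_mul zero_le_two 3]
    rw [Real.lt_sqrt (by norm_num)]; norm_num
  have hle : √2 / 2 ≤ 1 := by
    rw [div_le_one two_pos, Real.sqrt_le_left zero_le_two]; norm_num
  calc π / 4 = arccos (√2 / 2) := by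
        rw [← cos_pi_div_four,
          arccos_cos (by positivity : (0 : ℝ) ≤ π / 4) (by linarith [pi_pos])]
    _ < arccos (1 / √3) :=
        arccos_lt_arccos (by linarith [one_div_pos.2 (sqrt_pos.2 three_pos)]) hlt hle

lemma density_bound_at_eight_pt : 16 * π * deltaOct / (16 * π - 3 * (8 * pt)) = π / √18 := by
  have ha : -3 * π + 12 * arccos (1 / √3) ≠ 0 := by
    linarith [pi_div_four_lt_arccos_inv_sqrt_three]
  have h18 : √18 = 3 / 2 * √8 := by
    rw [show (18 : ℝ) = (3 / 2) ^ 2 * 8 by norm_num, Real.sqrt_mul (by positivity),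
      Real.sqrt_sq (by positivity)]
  have hpt : 16 * π - 3 * (8 * pt) = 24 * (-3 * π + 12 * arccos (1 / √3)) := by
    rw [pt]; ring
  rw [hpt, deltaOct, h18]
  generalize -3 * π + 12 * arccos (1 / √3) = X at ha ⊢
  field_simp
  ring

theorem score_bound_implies_density_bound_general
    (Λ : Set E) (σ : E → ℝ) (s : ℝ)
    (hpack : ∀ x ∈ Λ, ∀ y ∈ Λ, x ≠ y → 2 ≤ dist x y)
    (hscore : ∀ v ∈ Λ, σ v ≤ s)
    (hs : s < 16*π/3)
    (hasymp : ∃ C : ℝ, 0 < C ∧ ∀ N : ℝ, 1 ≤ N →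
      |(∑ᶠ v ∈ Λ ∩ Metric.closedBall (0:E) N, σ v) -
        4*(-(deltaOct) * (volume (Metric.closedBall (0:E) N)).toReal +
          (Nat.card ↥(Λ ∩ Metric.closedBall (0:E) N)) * (4*π/3))| ≤ C * N^2) :
    packingDensity Λ ≤ 16*π*deltaOct/(16*π - 3*s) ∧
    (s = 8 * pt → packingDensity Λ ≤ π / Real.sqrt 18) := by
  obtain ⟨C, -, hC⟩ := hasymp
  have hgap : 0 < 16 * π - 3 * s := by linarith
  have hdensity : packingDensity Λ ≤ 16 * π * deltaOct / (16 * π - 3 * s) := by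
    refine packingDensity_le_of_natCard_le (K := 3 * C / (16 * π - 3 * s)) fun N hN => ?_
    have hfin := Set.finite_inter_of_le_dist two_pos hpack (isCompact_closedBall (0 : E) N)
    have hsum := finsum_mem_le_natCard_nsmul hfin fun v hv => hscore v hv.1
    have hlower := (abs_le.1 (hC N hN)).1
    rw [nsmul_eq_mul] at hsum
    rw [EuclideanSpace.volume_closedBall_fin_three_toReal 0 (by linarith)] at hlower
    rw [div_mul_eq_mul_div, div_mul_eq_mul_div, ← add_div, le_div_iff₀ hgap]
    linarith
  exact ⟨hdensity, fun h8 => (h8 ▸ hdensity).trans_eq density_bound_at_eight_pt⟩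

/-- Lemma 2.1 of Hales, Sphere Packings I.  Λ is the set of centers of a
saturated packing of unit balls and σ assigns to each center the score of its
Delaunay star.  The hypothesis `hasymp` is the asymptotic identity
Σ_{Λ_N} σ(D*(v)) = 4(−δ_oct vol(B_N) + |Λ_N|·4π/3) + O(N²), which encodes that
the score is asymptotic to the compression and that Delaunay stars give a
four-fold cover of space.  If every Delaunay star scores at most s < 16π/3,
then the density is at most 16π·δ_oct/(16π − 3s); in particular a bound of
8 pt gives density at most π/√18. -/
theorem score_bound_implies_density_bound
    (Λ : Set E) (σ : E → ℝ) (s : ℝ)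
    (hpack : ∀ x ∈ Λ, ∀ y ∈ Λ, x ≠ y → 2 ≤ dist x y)
    (hsat : ∀ p : E, ∃ v ∈ Λ, dist p v ≤ 2)
    (hscore : ∀ v ∈ Λ, σ v ≤ s)
    (hs : s < 16*π/3)
    (hasymp : ∃ C : ℝ, 0 < C ∧ ∀ N : ℝ, 1 ≤ N →
      |(∑ᶠ v ∈ Λ ∩ Metric.closedBall (0:E) N, σ v) -
        4*(-(deltaOct) * (volume (Metric.closedBall (0:E) N)).toReal +
          (Nat.card ↥(Λ ∩ Metric.closedBall (0:E) N)) * (4*π/3))| ≤ C * N^2) :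
    packingDensity Λ ≤ 16*π*deltaOct/(16*π - 3*s) ∧
    (s = 8 * pt → packingDensity Λ ≤ π / Real.sqrt 18) :=
  score_bound_implies_density_bound_general Λ σ s hpack hscore hs hasymp
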